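/- The function S₂(Q) = 1 − h(B(Q)) with B(Q) = 1/2 + (1/2)√(Q(1−3Q/2)) − (√2/4)(1−3Q) is nonincreasing on [0, 1/6], with S₂(0) = 1 − h(1/2 − √2/4) > 0 and S₂(1/6) = 0. -/

import Mathlib

/-!
`B` is increasing where `Q (1 - 3Q/2)` is, i.e. on `(-∞, 1/3]`, and runs from `1/2 - √2/4` at
`Q = 0` to `1/2` at `Q = 1/6`, where `√(1/6 · 3/4) = √2/4` cancels `√2/4 · (1 - 1/2)`. So it maps
`[0, 1/6]` into `[0, 1/2]`, where the binary entropy is increasing and reaches its maximum `1`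
(bit) only at `1/2`.
-/

/-- Binary entropy (in bits). -/
noncomputable def binEnt (x : ℝ) : ℝ := -(x * Real.logb 2 x) - (1 - x) * Real.logb 2 (1 - x)

/-- The SARG two-photon phase-error bound. -/
noncomputable def Bsarg (Q : ℝ) : ℝ :=
  1 / 2 + (1 / 2) * Real.sqrt (Q * (1 - 3 * Q / 2)) - (Real.sqrt 2 / 4) * (1 - 3 * Q)

open Set Real

lemma binEnt_eq_binEntropy_div_log_two (x : ℝ) : binEnt x = binEntropy x / log 2 := by
  unfold binEnt binEntropy logb
  rw [log_inv, log_inv]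
  ring

lemma binEnt_monotoneOn : MonotoneOn binEnt (Icc 0 2⁻¹) := by
  intro a ha b hb hab
  simp only [binEnt_eq_binEntropy_div_log_two]
  gcongr
  exact binEntropy_strictMonoOn.monotoneOn ha hb hab

lemma binEnt_two_inv : binEnt 2⁻¹ = 1 := by
  rw [binEnt_eq_binEntropy_div_log_two, binEntropy_two_inv, div_self (log_pos one_lt_two).ne']

lemma binEnt_lt_one_iff {x : ℝ} : binEnt x < 1 ↔ x ≠ 2⁻¹ := by
  rw [binEnt_eq_binEntropy_div_log_two, div_lt_one (log_pos one_lt_two), binEntropy_lt_log_two]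

lemma Bsarg_zero : Bsarg 0 = 1 / 2 - √2 / 4 := by
  simp [Bsarg]

lemma Bsarg_one_sixth : Bsarg (1 / 6) = 2⁻¹ := by
  have hsqrt : √((1 / 6 : ℝ) * (1 - 3 * (1 / 6) / 2)) = √2 / 4 := by
    rw [sqrt_eq_iff_mul_self_eq (by norm_num) (by positivity)]
    nlinarith [sq_sqrt (zero_le_two : (0 : ℝ) ≤ 2)]
  rw [Bsarg, hsqrt]
  ring

lemma Bsarg_monotoneOn : MonotoneOn Bsarg (Iic (1 / 3)) := by
  intro a ha b hb hab
  have hradicand : a * (1 - 3 * a / 2) ≤ b * (1 - 3 * b / 2) := by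
    nlinarith [mul_nonneg (sub_nonneg.2 hab) (by linarith [mem_Iic.1 ha, mem_Iic.1 hb] :
      (0 : ℝ) ≤ 1 - 3 / 2 * (a + b))]
  have hsqrt := sqrt_le_sqrt hradicand
  have hlinear : 0 ≤ √2 * (b - a) := mul_nonneg (sqrt_nonneg 2) (sub_nonneg.2 hab)
  unfold Bsarg
  nlinarith

lemma Bsarg_monotoneOn_Icc : MonotoneOn Bsarg (Icc 0 (1 / 6)) :=
  Bsarg_monotoneOn.mono (Icc_subset_Iic_self.trans (Iic_subset_Iic.2 (by norm_num)))

lemma Bsarg_mapsTo : MapsTo Bsarg (Icc 0 (1 / 6)) (Icc 0 2⁻¹) := by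
  intro Q hQ
  have hlow := Bsarg_monotoneOn_Icc (left_mem_Icc.2 (by norm_num)) hQ hQ.1
  have hhigh := Bsarg_monotoneOn_Icc hQ (right_mem_Icc.2 (by norm_num)) hQ.2
  rw [Bsarg_zero] at hlow
  rw [Bsarg_one_sixth] at hhigh
  have : √2 ≤ 2 := by nlinarith [sq_sqrt (zero_le_two : (0 : ℝ) ≤ 2), sqrt_nonneg 2]
  exact ⟨by linarith, hhigh⟩

/-- Eve's minimal uncertainty on two-photon SARG pulses, `S₂(Q) = 1 − h(B(Q))`, is
nonincreasing on `[0, 1/6]`, with `S₂(0) = 1 − h(1/2 − √2/4) > 0` and `S₂(1/6) = 0`. -/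
theorem sarg_two_photon_uncertainty_properties :
    AntitoneOn (fun Q => 1 - binEnt (Bsarg Q)) (Set.Icc (0 : ℝ) (1 / 6)) ∧
    1 - binEnt (Bsarg 0) = 1 - binEnt (1 / 2 - Real.sqrt 2 / 4) ∧
    0 < 1 - binEnt (Bsarg 0) ∧
    1 - binEnt (Bsarg (1 / 6)) = 0 := by
  have hmono : MonotoneOn (binEnt ∘ Bsarg) (Icc 0 (1 / 6)) :=
    binEnt_monotoneOn.comp Bsarg_monotoneOn_Icc Bsarg_mapsTo
  refine ⟨fun a ha b hb hab => sub_le_sub_left (hmono ha hb hab) 1, by rw [Bsarg_zero], ?_, ?_⟩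
  · rw [Bsarg_zero, sub_pos, binEnt_lt_one_iff]
    exact (by linarith [sqrt_pos.2 (zero_lt_two : (0 : ℝ) < 2)] : 1 / 2 - √2 / 4 < 2⁻¹).ne
  · rw [Bsarg_one_sixth, binEnt_two_inv, sub_self]
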